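/- arXiv:2003.09174 — 2 statements merged into one kernel-verified Lean document; each statement's English description precedes it below -/
import Mathlib

section
/- Let A, G be symmetric positive definite n×n matrices satisfying A/ξ ⪯ G ⪯ η A for some ξ, η ≥ 1. Then for any vector u and any φ ∈ [0,1], the Broyden-class update satisfies A/ξ ⪯ Broyd_φ(A,G,u) ⪯ η A. -/
open Matrix

noncomputable def DFPupd {n : ℕ} (A G : Matrix (Fin n) (Fin n) ℝ) (u : Fin n → ℝ) :
    Matrix (Fin n) (Fin n) ℝ :=
  G - ((u ⬝ᵥ A.mulVec u)⁻¹) •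
      (vecMulVec (A.mulVec u) (G.mulVec u) + vecMulVec (G.mulVec u) (A.mulVec u))
    + (((u ⬝ᵥ G.mulVec u) / (u ⬝ᵥ A.mulVec u) + 1) * (u ⬝ᵥ A.mulVec u)⁻¹) •
      vecMulVec (A.mulVec u) (A.mulVec u)

noncomputable def BFGSupd {n : ℕ} (A G : Matrix (Fin n) (Fin n) ℝ) (u : Fin n → ℝ) :
    Matrix (Fin n) (Fin n) ℝ :=
  G - ((u ⬝ᵥ G.mulVec u)⁻¹) • vecMulVec (G.mulVec u) (G.mulVec u)
    + ((u ⬝ᵥ A.mulVec u)⁻¹) • vecMulVec (A.mulVec u) (A.mulVec u)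

noncomputable def Broyd {n : ℕ} (φ : ℝ) (A G : Matrix (Fin n) (Fin n) ℝ) (u : Fin n → ℝ) :
    Matrix (Fin n) (Fin n) ℝ :=
  if u = 0 then G else φ • DFPupd A G u + (1 - φ) • BFGSupd A G u

/-- Closeness measure θ(A, G, u). -/
noncomputable def theta {n : ℕ} (A G : Matrix (Fin n) (Fin n) ℝ) (u : Fin n → ℝ) : ℝ :=
  if u = 0 then 0 else
    Real.sqrt ((u ⬝ᵥ ((G - A) * A⁻¹ * (G - A)).mulVec u) /
      (u ⬝ᵥ (G * A⁻¹ * G).mulVec u))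

/-- Trace potential σ(A, G). -/
noncomputable def sigmaPot {n : ℕ} (A G : Matrix (Fin n) (Fin n) ℝ) : ℝ :=
  (A⁻¹ * (G - A)).trace

/-- Byrd–Nocedal potential ψ(A, G). -/
noncomputable def psiPot {n : ℕ} (A G : Matrix (Fin n) (Fin n) ℝ) : ℝ :=
  (A⁻¹ * (G - A)).trace - Real.log (A⁻¹ * G).det

noncomputable def omegaFn (t : ℝ) : ℝ := t - Real.log (1 + t)

/-!
For `u ≠ 0` put `a = uᵀAu`, `g = uᵀGu`. In quadratic forms,
`xᵀ DFP x = yᵀGy + (xᵀAu)²/a` with `y = x - (xᵀAu/a) u`, and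
`xᵀ BFGS x = xᵀGx - (xᵀGu)²/g + (xᵀAu)²/a`, where `xᵀMx - (xᵀMu)²/(uᵀMu)` is the minimum of
`(x - t u)ᵀM(x - t u)` over `t`. Moreover `DFP - BFGS = g wwᵀ` with `w = Au/a - Gu/g`, so every
`Broyd_φ` lies between BFGS and DFP in the Loewner order. Comparing `G` with `ηA` at `y` gives
`DFP ⪯ ηA`, and comparing `G` with `ξ⁻¹A` at the minimiser `z = x - (xᵀGu/g) u` gives
`ξ⁻¹A ⪯ BFGS`; the rank-one term `(xᵀAu)²/a` is absorbed since `ξ⁻¹ ≤ 1 ≤ η`.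
-/

namespace Matrix

section QuadraticForm

variable {m R : Type*} [Fintype m]

theorem dotProduct_vecMulVec_mulVec [CommSemiring R] (x a b : m → R) :
    x ⬝ᵥ vecMulVec a b *ᵥ x = (x ⬝ᵥ a) * (x ⬝ᵥ b) := by
  rw [vecMulVec_mulVec, op_smul_eq_smul, dotProduct_smul, smul_eq_mul, dotProduct_comm b,
    mul_comm]

theorem IsSymm.dotProduct_mulVec_comm [CommSemiring R] {M : Matrix m m R} (hM : M.IsSymm)
    (x y : m → R) : x ⬝ᵥ M *ᵥ y = y ⬝ᵥ M *ᵥ x := by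
  rw [dotProduct_mulVec, ← mulVec_transpose, hM.eq, dotProduct_comm]

theorem IsSymm.dotProduct_mulVec_sub_smul [CommRing R] {M : Matrix m m R} (hM : M.IsSymm)
    (x u : m → R) (t : R) :
    (x - t • u) ⬝ᵥ M *ᵥ (x - t • u)
      = x ⬝ᵥ M *ᵥ x - 2 * t * (x ⬝ᵥ M *ᵥ u) + t ^ 2 * (u ⬝ᵥ M *ᵥ u) := by
  simp only [mulVec_sub, mulVec_smul, dotProduct_sub, sub_dotProduct, dotProduct_smul,
    smul_dotProduct, smul_eq_mul, hM.dotProduct_mulVec_comm u x]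
  ring

theorem IsSymm.dotProduct_mulVec_sub_div_smul [Field R] {M : Matrix m m R} (hM : M.IsSymm)
    {u : m → R} (hu : u ⬝ᵥ M *ᵥ u ≠ 0) (x : m → R) :
    (x - ((x ⬝ᵥ M *ᵥ u) / (u ⬝ᵥ M *ᵥ u)) • u) ⬝ᵥ M *ᵥ (x - ((x ⬝ᵥ M *ᵥ u) / (u ⬝ᵥ M *ᵥ u)) • u)
      = x ⬝ᵥ M *ᵥ x - (x ⬝ᵥ M *ᵥ u) ^ 2 / (u ⬝ᵥ M *ᵥ u) := by
  rw [hM.dotProduct_mulVec_sub_smul]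
  field_simp
  ring

theorem IsSymm.le_dotProduct_mulVec_sub_smul [Field R] [LinearOrder R] [IsStrictOrderedRing R]
    {M : Matrix m m R} (hM : M.IsSymm) {u : m → R} (hu : 0 < u ⬝ᵥ M *ᵥ u) (x : m → R) (t : R) :
    x ⬝ᵥ M *ᵥ x - (x ⬝ᵥ M *ᵥ u) ^ 2 / (u ⬝ᵥ M *ᵥ u) ≤ (x - t • u) ⬝ᵥ M *ᵥ (x - t • u) := by
  have hsq : 0 ≤ (u ⬝ᵥ M *ᵥ u) * (t - (x ⬝ᵥ M *ᵥ u) / (u ⬝ᵥ M *ᵥ u)) ^ 2 := by positivity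
  rw [hM.dotProduct_mulVec_sub_smul, ← sub_nonneg]
  convert hsq using 1
  field_simp
  ring

end QuadraticForm

theorem posSemidef_vecMulVec_self {m R : Type*} [Finite m] [CommRing R] [PartialOrder R]
    [StarRing R] [StarOrderedRing R] [TrivialStar R] (w : m → R) :
    (vecMulVec w w).PosSemidef := by
  simpa using posSemidef_vecMulVec_self_star w

end Matrix

section Broyden

variable {n : ℕ} {A G : Matrix (Fin n) (Fin n) ℝ} {u : Fin n → ℝ}

theorem isSymm_DFPupd (hG : G.IsSymm) : (DFPupd A G u).IsSymm := by
  refine (hG.sub ((IsSymm.ext fun i j => ?_).smul _)).add ((IsSymm.ext fun i j => ?_).smul _) <;>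
    simp only [Matrix.add_apply, vecMulVec_apply] <;> ring

theorem isSymm_BFGSupd (hG : G.IsSymm) : (BFGSupd A G u).IsSymm := by
  refine (hG.sub ((IsSymm.ext fun i j => ?_).smul _)).add ((IsSymm.ext fun i j => ?_).smul _) <;>
    simp only [vecMulVec_apply] <;> ring

theorem dotProduct_DFPupd_mulVec (hG : G.IsSymm) (x : Fin n → ℝ) :
    x ⬝ᵥ DFPupd A G u *ᵥ x
      = (x - ((x ⬝ᵥ A *ᵥ u) / (u ⬝ᵥ A *ᵥ u)) • u) ⬝ᵥ G *ᵥ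
          (x - ((x ⬝ᵥ A *ᵥ u) / (u ⬝ᵥ A *ᵥ u)) • u)
        + (x ⬝ᵥ A *ᵥ u) ^ 2 / (u ⬝ᵥ A *ᵥ u) := by
  simp only [DFPupd, add_mulVec, sub_mulVec, smul_mulVec, dotProduct_add, dotProduct_sub,
    dotProduct_smul, smul_eq_mul, dotProduct_vecMulVec_mulVec, hG.dotProduct_mulVec_sub_smul]
  ring

theorem dotProduct_BFGSupd_mulVec (x : Fin n → ℝ) :
    x ⬝ᵥ BFGSupd A G u *ᵥ x
      = x ⬝ᵥ G *ᵥ x - (x ⬝ᵥ G *ᵥ u) ^ 2 / (u ⬝ᵥ G *ᵥ u)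
        + (x ⬝ᵥ A *ᵥ u) ^ 2 / (u ⬝ᵥ A *ᵥ u) := by
  simp only [BFGSupd, add_mulVec, sub_mulVec, smul_mulVec, dotProduct_add, dotProduct_sub,
    dotProduct_smul, smul_eq_mul, dotProduct_vecMulVec_mulVec]
  ring

theorem DFPupd_sub_BFGSupd (hg : u ⬝ᵥ G *ᵥ u ≠ 0) :
    DFPupd A G u - BFGSupd A G u
      = (u ⬝ᵥ G *ᵥ u) • vecMulVec ((u ⬝ᵥ A *ᵥ u)⁻¹ • A *ᵥ u - (u ⬝ᵥ G *ᵥ u)⁻¹ • G *ᵥ u)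
          ((u ⬝ᵥ A *ᵥ u)⁻¹ • A *ᵥ u - (u ⬝ᵥ G *ᵥ u)⁻¹ • G *ᵥ u) := by
  ext i j
  simp only [DFPupd, BFGSupd, Matrix.sub_apply, Matrix.add_apply, Matrix.smul_apply,
    vecMulVec_apply, Pi.sub_apply, Pi.smul_apply, smul_eq_mul]
  field_simp
  ring

theorem posSemidef_DFPupd_sub_BFGSupd (hG : G.PosDef) (hu : u ≠ 0) :
    (DFPupd A G u - BFGSupd A G u).PosSemidef := by
  have hg : 0 < u ⬝ᵥ G *ᵥ u := by simpa using hG.dotProduct_mulVec_pos hu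
  rw [DFPupd_sub_BFGSupd hg.ne']
  exact (posSemidef_vecMulVec_self _).smul hg.le

theorem posSemidef_smul_sub_DFPupd (hA : A.PosDef) (hG : G.IsSymm) (hu : u ≠ 0) {η : ℝ}
    (hη : 1 ≤ η) (h : (η • A - G).PosSemidef) : (η • A - DFPupd A G u).PosSemidef := by
  have hA' : A.IsSymm := isHermitian_iff_isSymm.1 hA.1
  have ha : 0 < u ⬝ᵥ A *ᵥ u := by simpa using hA.dotProduct_mulVec_pos hu
  refine .of_dotProduct_mulVec_nonneg
    (isHermitian_iff_isSymm.2 ((hA'.smul η).sub (isSymm_DFPupd hG))) fun x => ?_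
  set y := x - ((x ⬝ᵥ A *ᵥ u) / (u ⬝ᵥ A *ᵥ u)) • u
  have hy : 0 ≤ y ⬝ᵥ (η • A - G) *ᵥ y := by simpa using h.dotProduct_mulVec_nonneg y
  have hAy : y ⬝ᵥ A *ᵥ y = x ⬝ᵥ A *ᵥ x - (x ⬝ᵥ A *ᵥ u) ^ 2 / (u ⬝ᵥ A *ᵥ u) :=
    hA'.dotProduct_mulVec_sub_div_smul ha.ne' x
  have hrank : 0 ≤ (η - 1) * ((x ⬝ᵥ A *ᵥ u) ^ 2 / (u ⬝ᵥ A *ᵥ u)) := by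
    have := sub_nonneg.2 hη
    positivity
  simp only [star_trivial, sub_mulVec, smul_mulVec, dotProduct_sub, dotProduct_smul, smul_eq_mul,
    dotProduct_DFPupd_mulVec hG] at hy ⊢
  linear_combination hy + hrank + η * hAy

theorem posSemidef_BFGSupd_sub_smul (hA : A.PosDef) (hG : G.PosDef) (hu : u ≠ 0) {c : ℝ}
    (hc₀ : 0 ≤ c) (hc₁ : c ≤ 1) (h : (G - c • A).PosSemidef) :
    (BFGSupd A G u - c • A).PosSemidef := by
  have hA' : A.IsSymm := isHermitian_iff_isSymm.1 hA.1
  have hG' : G.IsSymm := isHermitian_iff_isSymm.1 hG.1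
  have ha : 0 < u ⬝ᵥ A *ᵥ u := by simpa using hA.dotProduct_mulVec_pos hu
  have hg : 0 < u ⬝ᵥ G *ᵥ u := by simpa using hG.dotProduct_mulVec_pos hu
  refine .of_dotProduct_mulVec_nonneg
    (isHermitian_iff_isSymm.2 ((isSymm_BFGSupd hG').sub (hA'.smul c))) fun x => ?_
  set z := x - ((x ⬝ᵥ G *ᵥ u) / (u ⬝ᵥ G *ᵥ u)) • u
  have hz : 0 ≤ z ⬝ᵥ (G - c • A) *ᵥ z := by simpa using h.dotProduct_mulVec_nonneg z
  have hGz : z ⬝ᵥ G *ᵥ z = x ⬝ᵥ G *ᵥ x - (x ⬝ᵥ G *ᵥ u) ^ 2 / (u ⬝ᵥ G *ᵥ u) :=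
    hG'.dotProduct_mulVec_sub_div_smul hg.ne' x
  have hAz : x ⬝ᵥ A *ᵥ x - (x ⬝ᵥ A *ᵥ u) ^ 2 / (u ⬝ᵥ A *ᵥ u) ≤ z ⬝ᵥ A *ᵥ z :=
    hA'.le_dotProduct_mulVec_sub_smul ha x _
  have hrank : 0 ≤ (1 - c) * ((x ⬝ᵥ A *ᵥ u) ^ 2 / (u ⬝ᵥ A *ᵥ u)) := by
    have := sub_nonneg.2 hc₁
    positivity
  simp only [star_trivial, sub_mulVec, smul_mulVec, dotProduct_sub, dotProduct_smul, smul_eq_mul,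
    dotProduct_BFGSupd_mulVec] at hz ⊢
  linear_combination hz + c * hAz + hrank + hGz

end Broyden

theorem broyden_preserves_bounds {n : ℕ} (A G : Matrix (Fin n) (Fin n) ℝ)
    (hA : A.PosDef) (hG : G.PosDef) (ξ η : ℝ) (hξ : 1 ≤ ξ) (hη : 1 ≤ η)
    (hlow : (G - ξ⁻¹ • A).PosSemidef) (hup : (η • A - G).PosSemidef)
    (u : Fin n → ℝ) (φ : ℝ) (hφ : φ ∈ Set.Icc (0 : ℝ) 1) :
    (Broyd φ A G u - ξ⁻¹ • A).PosSemidef ∧ (η • A - Broyd φ A G u).PosSemidef := by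
  obtain ⟨hφ₀, hφ₁⟩ := hφ
  rcases eq_or_ne u 0 with rfl | hu
  · simpa [Broyd] using ⟨hlow, hup⟩
  have hgap := posSemidef_DFPupd_sub_BFGSupd (A := A) hG hu
  have hBFGS := posSemidef_BFGSupd_sub_smul hA hG hu (inv_nonneg.2 (by linarith))
    (inv_le_one_of_one_le₀ hξ) hlow
  have hDFP := posSemidef_smul_sub_DFPupd hA (isHermitian_iff_isSymm.1 hG.1) hu hη hup
  constructor
  · convert hBFGS.add (hgap.smul hφ₀) using 1
    rw [Broyd, if_neg hu]
    module
  · convert hDFP.add (hgap.smul (sub_nonneg.2 hφ₁)) using 1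
    rw [Broyd, if_neg hu]
    module
end

section
/- If A, G are symmetric positive definite with A ⪯ G ⪯ (L/μ)A (0 < μ ≤ L), then θ(A,G,u) ≤ 1 - μ/L for every u, where θ(A,G,u) = [uᵀ(G-A)A⁻¹(G-A)u/(uᵀGA⁻¹Gu)]^{1/2} (θ(A,G,0) := 0). -/
/-!
With κ = L/μ, a Schur complement argument turns A ⪯ G ⪯ κA into
0 ⪯ X ⪯ c A⁻¹ for X = A⁻¹ - G⁻¹ and c = 1 - κ⁻¹. As G - A = G X A = A X G, the numerator
matrix of θ is G (X A X) G, and X A X ⪯ c X ⪯ c² A⁻¹, so it is dominated by c² G A⁻¹ G,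
the denominator matrix.
-/

open Matrix

open scoped MatrixOrder ComplexOrder

namespace Matrix

section CommRing

variable {α n : Type*} [CommRing α] [Fintype n] [DecidableEq n]

theorem sub_mul_inv_mul_sub_eq {A G : Matrix n n α} (hA : IsUnit A.det) (hG : IsUnit G.det) :
    (G - A) * A⁻¹ * (G - A) = G * (A⁻¹ - G⁻¹) * A * (A⁻¹ - G⁻¹) * G := by
  have hleft : G * (A⁻¹ - G⁻¹) * A = G - A := by
    rw [mul_sub, sub_mul, nonsing_inv_mul_cancel_right A _ hA, mul_nonsing_inv G hG, Matrix.one_mul]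
  have hright : A * (A⁻¹ - G⁻¹) * G = G - A := by
    rw [mul_sub, sub_mul, mul_nonsing_inv A hA, nonsing_inv_mul_cancel_right G _ hG, Matrix.one_mul]
  calc (G - A) * A⁻¹ * (G - A) = G * (A⁻¹ - G⁻¹) * A * A⁻¹ * (A * (A⁻¹ - G⁻¹) * G) := by
        rw [hleft, hright]
    _ = G * (A⁻¹ - G⁻¹) * A * (A⁻¹ - G⁻¹) * G := by
        rw [mul_nonsing_inv_cancel_right A _ hA]
        simp only [Matrix.mul_assoc]

end CommRing

variable {𝕜 n : Type*} [RCLike 𝕜] [Fintype n] [DecidableEq n]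

omit [DecidableEq n] in
theorem dotProduct_mulVec_le_of_le {M N : Matrix n n 𝕜} (h : M ≤ N) (x : n → 𝕜) :
    star x ⬝ᵥ M *ᵥ x ≤ star x ⬝ᵥ N *ᵥ x := by
  simpa [sub_mulVec, dotProduct_sub] using (le_iff.mp h).dotProduct_mulVec_nonneg x

theorem PosDef.inv_le_inv_of_le {A B : Matrix n n 𝕜} (hA : A.PosDef) (hB : B.PosDef)
    (hAB : A ≤ B) : B⁻¹ ≤ A⁻¹ := by
  have := hA.isUnit.invertible
  have := hA.inv.isUnit.invertible
  have := hB.isUnit.invertible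
  -- the two Schur complements of this block matrix are `B - A` and `A⁻¹ - B⁻¹`
  have hblock : (fromBlocks B 1 (1 : Matrix n n 𝕜)ᴴ A⁻¹).PosSemidef := by
    rw [PosDef.fromBlocks₂₂ _ _ hA.inv]
    simpa [inv_inv_of_invertible] using le_iff.mp hAB
  rw [PosDef.fromBlocks₁₁ _ _ hB] at hblock
  simpa [le_iff] using hblock

theorem mul_mul_le_smul_of_le_smul_inv {A X : Matrix n n 𝕜} (hA : A.PosDef) {c : ℝ}
    (hc : 0 ≤ c) (hX : 0 ≤ X) (hXA : X ≤ c • A⁻¹) : X * A * X ≤ c • X := by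
  obtain rfl | hc := hc.eq_or_lt
  · obtain rfl : X = 0 := le_antisymm (by simpa using hXA) hX
    simp
  have := hA.isUnit.invertible
  set Z := c • A⁻¹ - X
  have hZ : 0 ≤ Z := sub_nonneg.mpr hXA
  have hAZ : A * Z = c • 1 - A * X := by simp [Z, mul_sub, mul_inv_of_invertible]
  have hZA : Z * A = c • 1 - X * A := by simp [Z, sub_mul, inv_mul_of_invertible]
  -- noncommutative form of `c y (c - y) = (c - y) y (c - y) + y (c - y) y`, with `Z = c A⁻¹ - X`
  -- playing the role of `c - y`
  have key : c • (c • X - X * A * X) =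
      star (A * Z) * X * (A * Z) + star (A * X) * Z * (A * X) := by
    have hAsa : IsSelfAdjoint A := hA.isHermitian
    rw [star_mul, star_mul, hAsa.star_eq, (IsSelfAdjoint.of_nonneg hX).star_eq,
      (IsSelfAdjoint.of_nonneg hZ).star_eq, hZA, Matrix.mul_assoc X A Z, hAZ]
    simp only [Matrix.smul_mul, Matrix.mul_smul, sub_mul, mul_sub, Matrix.one_mul, Matrix.mul_one,
      smul_sub, smul_smul, Matrix.mul_assoc]
    abel
  have hscaled : 0 ≤ c • (c • X - X * A * X) :=
    key ▸ add_nonneg (star_left_conjugate_nonneg hX _) (star_left_conjugate_nonneg hZ _)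
  have := smul_nonneg (inv_nonneg.mpr hc.le) hscaled
  rwa [inv_smul_smul₀ hc.ne', sub_nonneg] at this

theorem sub_mul_inv_mul_sub_le {A G : Matrix n n 𝕜} (hA : A.PosDef) (hG : G.PosDef) {κ : ℝ}
    (hκ : 1 ≤ κ) (hAG : A ≤ G) (hGA : G ≤ κ • A) :
    (G - A) * A⁻¹ * (G - A) ≤ (1 - κ⁻¹) ^ 2 • (G * A⁻¹ * G) := by
  have := hA.isUnit.invertible
  have hc : 0 ≤ 1 - κ⁻¹ := sub_nonneg.mpr (inv_le_one_of_one_le₀ hκ)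
  have hκA_inv : (κ • A)⁻¹ = κ⁻¹ • A⁻¹ := inv_eq_left_inv <| by
    rw [smul_mul_smul_comm, inv_mul_cancel₀ (by positivity), inv_mul_of_invertible, one_smul]
  have hX_nonneg : 0 ≤ A⁻¹ - G⁻¹ := sub_nonneg.mpr (hA.inv_le_inv_of_le hG hAG)
  have hX_le : A⁻¹ - G⁻¹ ≤ (1 - κ⁻¹) • A⁻¹ := by
    have := hG.inv_le_inv_of_le (hA.smul (by positivity)) hGA
    rw [hκA_inv] at this
    rw [sub_smul, one_smul]
    exact sub_le_sub_left this _
  have hXAX : (A⁻¹ - G⁻¹) * A * (A⁻¹ - G⁻¹) ≤ (1 - κ⁻¹) ^ 2 • A⁻¹ :=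
    calc _ ≤ (1 - κ⁻¹) • (A⁻¹ - G⁻¹) := mul_mul_le_smul_of_le_smul_inv hA hc hX_nonneg hX_le
      _ ≤ (1 - κ⁻¹) ^ 2 • A⁻¹ := by
        rw [sq, mul_smul]
        exact smul_le_smul_of_nonneg_left hX_le hc
  have := (IsSelfAdjoint.of_nonneg hG.posSemidef.nonneg).conjugate_le_conjugate hXAX
  rw [sub_mul_inv_mul_sub_eq hA.det_pos.ne'.isUnit hG.det_pos.ne'.isUnit]
  simpa only [Matrix.mul_assoc, Matrix.mul_smul, Matrix.smul_mul] using this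

end Matrix

theorem theta_le_one_sub {n : ℕ} (A G : Matrix (Fin n) (Fin n) ℝ)
    (hA : A.PosDef) (hG : G.PosDef) (μ L : ℝ) (hμ : 0 < μ) (hμL : μ ≤ L)
    (hlow : (G - A).PosSemidef) (hup : ((L / μ) • A - G).PosSemidef) :
    ∀ u : Fin n → ℝ, theta A G u ≤ 1 - μ / L := by
  intro u
  have hc : 0 ≤ 1 - μ / L := sub_nonneg.mpr (div_le_one_of_le₀ hμL (hμ.trans_le hμL).le)
  have hbound := sub_mul_inv_mul_sub_le hA hG ((one_le_div hμ).mpr hμL) (le_iff.mpr hlow)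
    (le_iff.mpr hup)
  rw [inv_div] at hbound
  unfold theta
  split_ifs
  · exact hc
  have hq := dotProduct_mulVec_le_of_le hbound u
  have hq_nonneg := (hA.inv.posSemidef.conjTranspose_mul_mul_same G).dotProduct_mulVec_nonneg u
  simp only [star_trivial, smul_mulVec, dotProduct_smul, smul_eq_mul,
    hG.isHermitian.eq] at hq hq_nonneg
  calc _ ≤ √((1 - μ / L) ^ 2) := Real.sqrt_le_sqrt (div_le_of_le_mul₀ hq_nonneg (sq_nonneg _) hq)
    _ = 1 - μ / L := Real.sqrt_sq hc
end
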